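/- arXiv:2209.03582 — 7 statements merged into one kernel-verified Lean document; each statement's English description precedes it below -/
import Mathlib

section
/- Every solution of the difference equation y_{n+1} = (3/2)|y_n| + (1/2)y_n - y_{n-1}, with real initial conditions (y_{-1}, y_0) satisfying 0 ≤ y_{-1} < y_0, is given explicitly by y_n = y_{-1} + (n+1)(y_0 - y_{-1}) for all n ≥ 1, and hence tends to +∞. -/
/-!
While the terms are nonnegative, `|y_n| = y_n` and the recursion is the linear one
`y_{n+1} = 2 y_n - y_{n-1}`, whose solutions are arithmetic progressions. An arithmetic
progression starting at `y_{-1} ≥ 0` with step `y_0 - y_{-1} ≥ 0` stays nonnegative, so a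
two-step induction shows that the solution is that progression for all time.
-/

lemma three_halves_abs_add_half_sub_of_nonneg {a b : ℝ} (hb : 0 ≤ b) :
    (3/2) * |b| + (1/2) * b - a = 2 * b - a := by
  rw [abs_of_nonneg hb]
  ring

lemma eq_add_mul_of_abs_rec (y : ℕ → ℝ)
    (hrec : ∀ n : ℕ, y (n + 2) = (3/2) * |y (n + 1)| + (1/2) * y (n + 1) - y n)
    (h0 : 0 ≤ y 0) (h1 : y 0 ≤ y 1) (n : ℕ) :
    y n = y 0 + n * (y 1 - y 0) := by
  induction n using Nat.twoStepInduction with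
  | zero => simp
  | one => simp
  | more k ihk ihk1 =>
    have hnonneg : 0 ≤ y (k + 1) := by
      rw [ihk1]
      have : 0 ≤ ((k + 1 : ℕ) : ℝ) * (y 1 - y 0) := mul_nonneg (by positivity) (by linarith)
      linarith
    rw [hrec, three_halves_abs_add_half_sub_of_nonneg hnonneg, ihk, ihk1]
    push_cast
    ring

lemma tendsto_add_mul_atTop {a d : ℝ} (hd : 0 < d) :
    Filter.Tendsto (fun n : ℕ => a + n * d) Filter.atTop Filter.atTop :=
  Filter.tendsto_atTop_add_const_left _ _ (tendsto_natCast_atTop_atTop.atTop_mul_const hd)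

/-- Here `y k` denotes the term of index `k - 1`, so `y 0 = y_{-1}` and `y 1 = y_0`. -/
theorem stmt_0 (y : ℕ → ℝ)
    (hrec : ∀ n : ℕ, y (n + 2) = (3/2) * |y (n + 1)| + (1/2) * y (n + 1) - y n)
    (h0 : 0 ≤ y 0) (h1 : y 0 < y 1) :
    (∀ n : ℕ, 1 ≤ n → y (n + 1) = y 0 + (n + 1 : ℝ) * (y 1 - y 0)) ∧
      Filter.Tendsto y Filter.atTop Filter.atTop := by
  have hy := eq_add_mul_of_abs_rec y hrec h0 h1.le
  refine ⟨fun n _ => ?_, ?_⟩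
  · rw [hy (n + 1)]
    push_cast
    ring
  · exact (tendsto_add_mul_atTop (by linarith)).congr fun n => (hy n).symm
end

section
/- Every solution of the difference equation y_{n+1} = (3/2)|y_n| + (1/2)y_n - y_{n-1} which is not constant (i.e., not an equilibrium point) diverges to +∞. -/
/-!
For `y (n+1) ≥ 0` the recurrence is the linear one `y (n+2) = 2 y (n+1) - y n`, so once two
consecutive terms satisfy `y n ≤ y (n+1)` with `y (n+1) ≥ 0`, the solution is an arithmetic
progression with difference `y (n+1) - y n ≥ 0` from then on. Such a pair always occurs: after a
negative term the map `y (n+2) = -y (n+1) - y n` produces one within two steps, and a solution that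
never becomes negative is an arithmetic progression from the start, whose difference cannot be
negative. A positive difference gives divergence to `+∞`; a zero difference gives a constant
tail `c ≥ 0`, and the linear recurrence run backwards forces the whole solution to be `c`.
-/

open Filter

theorem eq_add_mul_of_forall_eq_two_mul_sub {y : ℕ → ℝ}
    (h : ∀ k, y (k + 2) = 2 * y (k + 1) - y k) (k : ℕ) :
    y k = y 0 + k * (y 1 - y 0) := by
  induction k using Nat.twoStepInduction with
  | zero => simp
  | one => simp
  | more k ih₀ ih₁ => rw [h, ih₀, ih₁]; push_cast; ring

def IsSolution (y : ℕ → ℝ) : Prop :=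
  ∀ n : ℕ, y (n + 2) = (3/2) * |y (n + 1)| + (1/2) * y (n + 1) - y n

namespace IsSolution

variable {y : ℕ → ℝ}

theorem step_of_nonneg (hy : IsSolution y) {n : ℕ} (h : 0 ≤ y (n + 1)) :
    y (n + 2) = 2 * y (n + 1) - y n := by
  rw [hy, abs_of_nonneg h]; ring

theorem step_of_neg (hy : IsSolution y) {n : ℕ} (h : y (n + 1) < 0) :
    y (n + 2) = -y (n + 1) - y n := by
  rw [hy, abs_of_neg h]; ring

theorem exists_le_succ_nonneg_of_neg (hy : IsSolution y) {m : ℕ} (hm : y (m + 1) < 0) :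
    ∃ n, y n ≤ y (n + 1) ∧ 0 ≤ y (n + 1) := by
  have h₂ := hy.step_of_neg hm
  by_cases h₂nonneg : 0 ≤ y (m + 2)
  · exact ⟨m + 1, by linarith, h₂nonneg⟩
  · have h₃ : y (m + 3) = y m := by
      rw [hy.step_of_neg (n := m + 1) (by linarith), h₂]; ring
    exact ⟨m + 2, by rw [h₃]; linarith, by rw [h₃]; linarith⟩

theorem apply_zero_le_apply_one_of_forall_nonneg (hy : IsSolution y) (h : ∀ n, 0 ≤ y (n + 1)) :
    y 0 ≤ y 1 := by
  have harith := eq_add_mul_of_forall_eq_two_mul_sub fun k ↦ hy.step_of_nonneg (h k)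
  by_contra! hlt
  obtain ⟨k, hk⟩ := exists_nat_gt (y 0 / (y 0 - y 1))
  rw [div_lt_iff₀ (by linarith)] at hk
  have := h k
  rw [harith] at this
  push_cast at this
  nlinarith

theorem exists_le_succ_nonneg (hy : IsSolution y) : ∃ n, y n ≤ y (n + 1) ∧ 0 ≤ y (n + 1) := by
  by_cases h : ∀ n, 0 ≤ y (n + 1)
  · exact ⟨0, hy.apply_zero_le_apply_one_of_forall_nonneg h, h 0⟩
  · push Not at h
    obtain ⟨m, hm⟩ := h
    exact hy.exists_le_succ_nonneg_of_neg hm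

theorem le_succ_and_nonneg_add (hy : IsSolution y) {n : ℕ} (hle : y n ≤ y (n + 1))
    (hnonneg : 0 ≤ y (n + 1)) (k : ℕ) : y (n + k) ≤ y (n + k + 1) ∧ 0 ≤ y (n + k + 1) := by
  induction k with
  | zero => exact ⟨hle, hnonneg⟩
  | succ k ih =>
    have := hy.step_of_nonneg ih.2
    show y (n + k + 1) ≤ y (n + k + 2) ∧ 0 ≤ y (n + k + 2)
    exact ⟨by rw [this]; linarith, by rw [this]; linarith⟩

theorem eq_add_mul_of_le_succ (hy : IsSolution y) {n : ℕ} (hle : y n ≤ y (n + 1))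
    (hnonneg : 0 ≤ y (n + 1)) (k : ℕ) : y (k + n) = y n + k * (y (n + 1) - y n) := by
  have hlin (k : ℕ) : y (k + 2 + n) = 2 * y (k + 1 + n) - y (k + n) := by
    have := hy.step_of_nonneg (hy.le_succ_and_nonneg_add hle hnonneg k).2
    rwa [add_right_comm k 2, add_right_comm k 1, add_comm k n]
  simpa [add_comm 1 n] using eq_add_mul_of_forall_eq_two_mul_sub (y := fun k ↦ y (k + n)) hlin k

theorem eq_of_forall_add_eq (hy : IsSolution y) {c : ℝ} (hc : 0 ≤ c) {n : ℕ}
    (h : ∀ k, y (n + k) = c) (m : ℕ) : y m = c := by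
  induction n with
  | zero => simpa using h m
  | succ n ih =>
    refine ih fun k ↦ ?_
    cases k with
    | zero =>
      have h₁ : y (n + 1) = c := h 0
      have h₂ : y (n + 2) = c := h 1
      have := hy.step_of_nonneg (h₁ ▸ hc)
      show y n = c
      linarith
    | succ k => rw [← h k]; ring_nf

end IsSolution

/-- Every solution of `y_{n+1} = (3/2)|y_n| + (1/2)y_n - y_{n-1}` which is not
constant diverges to `+∞`. -/
theorem stmt_2 (y : ℕ → ℝ)
    (hrec : ∀ n : ℕ, y (n + 2) = (3/2) * |y (n + 1)| + (1/2) * y (n + 1) - y n)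
    (hnc : ¬ ∃ c : ℝ, ∀ n, y n = c) :
    Filter.Tendsto y Filter.atTop Filter.atTop := by
  have hy : IsSolution y := hrec
  obtain ⟨n, hle, hnonneg⟩ := hy.exists_le_succ_nonneg
  have harith := hy.eq_add_mul_of_le_succ hle hnonneg
  rcases hle.eq_or_lt with heq | hlt
  · refine absurd ⟨y n, hy.eq_of_forall_add_eq (heq ▸ hnonneg) (n := n) fun k ↦ ?_⟩ hnc
    rw [add_comm, harith, heq, sub_self, mul_zero, add_zero]
  · rw [← tendsto_add_atTop_iff_nat n]
    simp_rw [harith]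
    exact tendsto_atTop_add_const_left _ _
      (tendsto_natCast_atTop_atTop.atTop_mul_const (sub_pos.2 hlt))
end

section
/- Let |a| > 1/2. The initial conditions (x_{-1}, x_0) generating 2-periodic (non-constant, period exactly 2) solutions of x_{n+1} = 1 - a|x_n| + a·x_{n-1} are exactly (1/(2a²-2a+1), (1-2a)/(2a²-2a+1)) and ((1-2a)/(2a²-2a+1), 1/(2a²-2a+1)), and these exist only when a > 1/2. -/
/-! On each sign quadrant of `(x, y)` the 2-cycle equations are linear. Subtracting them gives
`(x - y)(1 - 2a) = 0` when `x, y ≥ 0` and `x = y` when `x, y < 0`, so a genuine 2-cycle with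
`a ≠ 1/2` has coordinates of opposite signs. For `x ≥ 0 > y` the system has determinant
`(1 - a)² + a² = 2a² - 2a + 1 > 0`, whose unique solution has `y = (1 - 2a)/(2a² - 2a + 1)`;
this is negative exactly when `a > 1/2`. -/

def IsTwoCycle (a x y : ℝ) : Prop :=
  x ≠ y ∧ x = 1 - a * |y| + a * x ∧ y = 1 - a * |x| + a * y

namespace IsTwoCycle

variable {a x y : ℝ}

theorem symm (h : IsTwoCycle a x y) : IsTwoCycle a y x :=
  ⟨h.1.symm, h.2.2, h.2.1⟩

theorem signs_differ (h : IsTwoCycle a x y) (ha : a ≠ 1 / 2) :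
    (0 ≤ x ∧ y < 0) ∨ (x < 0 ∧ 0 ≤ y) := by
  obtain ⟨hxy, hx_eq, hy_eq⟩ := h
  rcases le_or_gt 0 x with hx | hx <;> rcases le_or_gt 0 y with hy | hy
  · rw [abs_of_nonneg hy] at hx_eq
    rw [abs_of_nonneg hx] at hy_eq
    have hprod : (x - y) * (1 - 2 * a) = 0 := by linear_combination hx_eq - hy_eq
    rcases mul_eq_zero.mp hprod with h | h
    · exact absurd (sub_eq_zero.mp h) hxy
    · exact absurd (by linarith) ha
  · exact Or.inl ⟨hx, hy⟩
  · exact Or.inr ⟨hx, hy⟩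
  · rw [abs_of_neg hy] at hx_eq
    rw [abs_of_neg hx] at hy_eq
    exact absurd (by linarith) hxy

end IsTwoCycle

theorem two_mul_sq_sub_two_mul_add_one_pos (a : ℝ) : 0 < 2 * a ^ 2 - 2 * a + 1 := by
  nlinarith [sq_nonneg (2 * a - 1)]

theorem eq_of_twoCycle_equations_of_nonneg_of_neg {a x y : ℝ}
    (hx_eq : x = 1 - a * |y| + a * x) (hy_eq : y = 1 - a * |x| + a * y)
    (hx : 0 ≤ x) (hy : y < 0) :
    x = 1 / (2 * a ^ 2 - 2 * a + 1) ∧ y = (1 - 2 * a) / (2 * a ^ 2 - 2 * a + 1) := by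
  have hD := (two_mul_sq_sub_two_mul_add_one_pos a).ne'
  rw [abs_of_neg hy] at hx_eq
  rw [abs_of_nonneg hx] at hy_eq
  constructor <;> rw [eq_div_iff hD]
  · linear_combination (1 - a) * hx_eq + a * hy_eq
  · linear_combination (1 - a) * hy_eq - a * hx_eq

theorem isTwoCycle_of_half_lt {a : ℝ} (ha : 1 / 2 < a) :
    IsTwoCycle a (1 / (2 * a ^ 2 - 2 * a + 1)) ((1 - 2 * a) / (2 * a ^ 2 - 2 * a + 1)) := by
  have hD := two_mul_sq_sub_two_mul_add_one_pos a
  set D := 2 * a ^ 2 - 2 * a + 1 with hD_def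
  have hx : |1 / D| = 1 / D := abs_of_pos (by positivity)
  have hy : |(1 - 2 * a) / D| = (2 * a - 1) / D := by
    rw [abs_of_neg (div_neg_of_neg_of_pos (by linarith) hD)]
    ring
  refine ⟨?_, ?_, ?_⟩
  · rw [Ne, div_left_inj' hD.ne']
    linarith
  · rw [hy]
    field_simp
    linear_combination hD_def
  · rw [hx]
    field_simp
    linear_combination hD_def

/-- For `|a| > 1/2`, the initial conditions generating genuinely 2-periodic
solutions of `x_{n+1} = 1 - a|x_n| + a x_{n-1}` are exactly the two pairs
`(1/(2a²-2a+1), (1-2a)/(2a²-2a+1))` and its swap, and they exist only for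
`a > 1/2`. -/
theorem stmt_5 (a : ℝ) (ha : 1/2 < |a|) (x y : ℝ) :
    (x ≠ y ∧ x = 1 - a * |y| + a * x ∧ y = 1 - a * |x| + a * y) ↔
      (1/2 < a ∧
        ((x, y) = (1 / (2*a^2 - 2*a + 1), (1 - 2*a) / (2*a^2 - 2*a + 1)) ∨
         (x, y) = ((1 - 2*a) / (2*a^2 - 2*a + 1), 1 / (2*a^2 - 2*a + 1)))) := by
  have hD := two_mul_sq_sub_two_mul_add_one_pos a
  change IsTwoCycle a x y ↔ _
  constructor
  · intro h
    have ha' : a ≠ 1 / 2 := by rintro rfl; norm_num at ha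
    rcases h.signs_differ ha' with ⟨hx, hy⟩ | ⟨hx, hy⟩
    · obtain ⟨rfl, rfl⟩ := eq_of_twoCycle_equations_of_nonneg_of_neg h.2.1 h.2.2 hx hy
      exact ⟨by linarith [(div_lt_iff₀ hD).mp hy], Or.inl rfl⟩
    · obtain ⟨rfl, rfl⟩ := eq_of_twoCycle_equations_of_nonneg_of_neg h.2.2 h.2.1 hy hx
      exact ⟨by linarith [(div_lt_iff₀ hD).mp hx], Or.inr rfl⟩
  · rintro ⟨ha, h | h⟩ <;> obtain ⟨rfl, rfl⟩ := Prod.mk.inj h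
    · exact isTwoCycle_of_half_lt ha
    · exact (isTwoCycle_of_half_lt ha).symm
end

section
/- If a pair (x, y) generates a 2-periodic solution of x_{n+1} = 1 - (1/2)|x_n| + (1/2)x_{n-1} (i.e., x = 1 - (1/2)|y| + (1/2)x and y = 1 - (1/2)|x| + (1/2)y, with x ≠ y), then 0 ≤ x ≤ 2, 0 ≤ y ≤ 2, and x + y = 2. Conversely, every pair (x, y) with 0 ≤ x, y ≤ 2, x + y = 2 and x ≠ y generates a 2-periodic solution. -/
/-! A pair `(x, y)` is 2-periodic exactly when `x = 2 - |y|` and `y = 2 - |x|`. Neither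
coordinate can be negative: if `x < 0` then `y = 2 + x`, and `x = 2 - |2 + x|` has no negative
solution. With both coordinates nonnegative the two equations collapse to `x + y = 2`. -/

theorem eq_one_sub_half_abs_add_half_iff {a b : ℝ} :
    a = 1 - (1/2) * |b| + (1/2) * a ↔ a = 2 - |b| := by
  constructor <;> intro h <;> linarith

theorem nonneg_of_eq_two_sub_abs {x y : ℝ} (hx : x = 2 - |y|) (hy : y = 2 - |x|) : 0 ≤ x := by
  by_contra! hneg
  rw [abs_of_neg hneg] at hy
  rcases abs_cases y with ⟨hy_abs, _⟩ | ⟨hy_abs, _⟩ <;> rw [hy_abs] at hx <;> linarith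

theorem eq_two_sub_abs_and_eq_two_sub_abs_iff {x y : ℝ} :
    x = 2 - |y| ∧ y = 2 - |x| ↔ 0 ≤ x ∧ 0 ≤ y ∧ x + y = 2 := by
  constructor
  · rintro ⟨hx, hy⟩
    have hx0 := nonneg_of_eq_two_sub_abs hx hy
    have hy0 := nonneg_of_eq_two_sub_abs hy hx
    rw [abs_of_nonneg hy0] at hx
    exact ⟨hx0, hy0, by linarith⟩
  · rintro ⟨hx0, hy0, hsum⟩
    rw [abs_of_nonneg hx0, abs_of_nonneg hy0]
    exact ⟨by linarith, by linarith⟩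

/-- `(x, y)` generates a (non-constant) 2-periodic solution of
`x_{n+1} = 1 - (1/2)|x_n| + (1/2)x_{n-1}` iff `0 ≤ x, y ≤ 2`, `x + y = 2` and
`x ≠ y`. -/
theorem stmt_9 (x y : ℝ) :
    (x = 1 - (1/2) * |y| + (1/2) * x ∧ y = 1 - (1/2) * |x| + (1/2) * y ∧ x ≠ y)
      ↔ (0 ≤ x ∧ x ≤ 2 ∧ 0 ≤ y ∧ y ≤ 2 ∧ x + y = 2 ∧ x ≠ y) := by
  rw [eq_one_sub_half_abs_add_half_iff, eq_one_sub_half_abs_add_half_iff, ← and_assoc,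
    eq_two_sub_abs_and_eq_two_sub_abs_iff]
  constructor
  · rintro ⟨⟨hx0, hy0, hsum⟩, hne⟩
    exact ⟨hx0, by linarith, hy0, by linarith, hsum, hne⟩
  · rintro ⟨hx0, -, hy0, -, hsum, hne⟩
    exact ⟨⟨hx0, hy0, hsum⟩, hne⟩
end

section
/- The triangles Δ_ℓ = {(x,y) : 0 ≤ x ≤ 2, 0 ≤ y ≤ 2, x + y ≤ 2} and Δ_u = {(x,y) : 0 ≤ x ≤ 2, 0 ≤ y ≤ 2, x + y ≥ 2} are each invariant under the map F(x,y) = (y, 1 - (1/2)|y| + (1/2)x), i.e., F(Δ_ℓ) ⊆ Δ_ℓ and F(Δ_u) ⊆ Δ_u. -/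
/-!
On the square `[0,2]²` we have `|y| = y`, so `F(x,y) = (y, 1 + (x - y)/2)` maps the square into
itself, and the coordinate sum changes by `x + y ↦ 1 + (x + y)/2`, i.e. its distance to `2` is
halved. Hence `F` preserves each side of the diagonal `x + y = 2`.
-/

lemma one_sub_half_abs_add_half_mem_Icc {x y : ℝ} (hx : x ∈ Set.Icc (0 : ℝ) 2)
    (hy : y ∈ Set.Icc (0 : ℝ) 2) : 1 - (1/2) * |y| + (1/2) * x ∈ Set.Icc (0 : ℝ) 2 := by
  obtain ⟨hx0, hx2⟩ := hx
  obtain ⟨hy0, hy2⟩ := hy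
  rw [abs_of_nonneg hy0]
  constructor <;> linarith

lemma add_one_sub_half_abs_add_half_sub_two {x y : ℝ} (hy : 0 ≤ y) :
    y + (1 - (1/2) * |y| + (1/2) * x) - 2 = (x + y - 2) / 2 := by
  rw [abs_of_nonneg hy]
  ring

/-- The triangles `Δℓ` and `Δu` are invariant under
`F(x,y) = (y, 1 - (1/2)|y| + (1/2)x)`. -/
theorem stmt_10 :
    let F : ℝ × ℝ → ℝ × ℝ := fun p => (p.2, 1 - (1/2) * |p.2| + (1/2) * p.1)
    let Δl : Set (ℝ × ℝ) :=
      {p | 0 ≤ p.1 ∧ p.1 ≤ 2 ∧ 0 ≤ p.2 ∧ p.2 ≤ 2 ∧ p.1 + p.2 ≤ 2}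
    let Δu : Set (ℝ × ℝ) :=
      {p | 0 ≤ p.1 ∧ p.1 ≤ 2 ∧ 0 ≤ p.2 ∧ p.2 ≤ 2 ∧ 2 ≤ p.1 + p.2}
    F '' Δl ⊆ Δl ∧ F '' Δu ⊆ Δu := by
  intro F Δl Δu
  constructor <;>
  · rintro _ ⟨⟨x, y⟩, ⟨hx0, hx2, hy0, hy2, hsum⟩, rfl⟩
    dsimp only [F] at *
    obtain ⟨hz0, hz2⟩ := one_sub_half_abs_add_half_mem_Icc ⟨hx0, hx2⟩ ⟨hy0, hy2⟩
    have hsum_image := add_one_sub_half_abs_add_half_sub_two (x := x) hy0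
    exact ⟨hy0, hy2, hz0, hz2, by linarith⟩
end

section
/- The solution of the difference equation x_{n+1} = 1 - (1/2)|x_n| + (1/2)x_{n-1} with initial conditions x_{-1} = x_0 = 0 satisfies x_n = (1/3)(-1)^{n+1} - (4/3)(1/2)^{n+1} + 1 for all n ≥ -1; in particular x_n ≥ 0 for all n ≥ 1, x_{2n} → 2/3 and x_{2n+1} → 4/3. -/
/-!
The closed form `f k = (1/3)(-1)^k - (4/3)(1/2)^k + 1` solves the *linear* recurrence
`f (n+2) = 1 - f (n+1)/2 + f n/2` (both geometric terms have ratios that are roots of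
`2r² + r - 1`), and `f k ≥ 0` for `k ≥ 1`. So along the solution the absolute value never
bites, and by induction the nonlinear recurrence reproduces `f`. The two subsequences are
`2/3 - (2/3)(1/4)^n` and `4/3 - (1/3)(1/4)^n`.
-/

open Filter Topology

noncomputable def closedForm (k : ℕ) : ℝ := (1/3) * (-1 : ℝ)^k - (4/3) * (1/2 : ℝ)^k + 1

lemma closedForm_nonneg {k : ℕ} (hk : 1 ≤ k) : 0 ≤ closedForm k := by
  have h_sign : (-1 : ℝ) ≤ (-1 : ℝ)^k := by
    rcases Nat.even_or_odd k with h | h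
    · rw [h.neg_one_pow]; norm_num
    · rw [h.neg_one_pow]
  have h_geom : (1/2 : ℝ)^k ≤ 1/2 := by
    simpa using pow_le_pow_of_le_one (by norm_num : (0 : ℝ) ≤ 1/2) (by norm_num) hk
  unfold closedForm
  linarith

lemma closedForm_add_two (n : ℕ) :
    closedForm (n + 2) = 1 - (1/2) * closedForm (n + 1) + (1/2) * closedForm n := by
  simp only [closedForm, pow_succ]
  ring

lemma closedForm_two_mul_add_one (n : ℕ) :
    closedForm (2 * n + 1) = 2/3 - (2/3) * (1/4 : ℝ)^n := by
  simp only [closedForm, pow_succ, pow_mul]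
  norm_num
  ring

lemma closedForm_two_mul_add_two (n : ℕ) :
    closedForm (2 * n + 2) = 4/3 - (1/3) * (1/4 : ℝ)^n := by
  simp only [closedForm, pow_succ, pow_mul]
  norm_num
  ring

lemma eq_closedForm_of_rec {z : ℕ → ℝ} (h0 : z 0 = 0) (h1 : z 1 = 0)
    (hrec : ∀ n, z (n + 2) = 1 - (1/2) * |z (n + 1)| + (1/2) * z n) (k : ℕ) :
    z k = closedForm k := by
  induction k using Nat.strong_induction_on with
  | _ k ih =>
    match k, ih with
    | 0, _ => rw [h0, closedForm]; norm_num
    | 1, _ => rw [h1, closedForm]; norm_num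
    | n + 2, ih =>
      have h_prev : z (n + 1) = closedForm (n + 1) := ih (n + 1) (by omega)
      rw [hrec, h_prev, abs_of_nonneg (closedForm_nonneg (by omega)), ih n (by omega),
        closedForm_add_two]

lemma tendsto_sub_mul_pow_of_lt_one {r : ℝ} (hr₀ : 0 ≤ r) (hr₁ : r < 1) (a c : ℝ) :
    Tendsto (fun n : ℕ => c - a * r ^ n) atTop (𝓝 c) := by
  simpa using tendsto_const_nhds.sub ((tendsto_pow_atTop_nhds_zero_of_lt_one hr₀ hr₁).const_mul a)

/-- The solution of `x_{n+1} = 1 - (1/2)|x_n| + (1/2)x_{n-1}` with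
`x_{-1} = x_0 = 0` satisfies `x_n = (1/3)(-1)^{n+1} - (4/3)(1/2)^{n+1} + 1`
for all `n ≥ -1`; in particular it is nonnegative from `n = 1` on,
`x_{2n} → 2/3` and `x_{2n+1} → 4/3`.  Here `z k = x_{k-1}`. -/
theorem stmt_13 (z : ℕ → ℝ) (h0 : z 0 = 0) (h1 : z 1 = 0)
    (hrec : ∀ n : ℕ, z (n + 2) = 1 - (1/2) * |z (n + 1)| + (1/2) * z n) :
    (∀ k : ℕ, z k = (1/3) * (-1 : ℝ)^k - (4/3) * (1/2 : ℝ)^k + 1) ∧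
    (∀ k : ℕ, 2 ≤ k → 0 ≤ z k) ∧
    Filter.Tendsto (fun n : ℕ => z (2 * n + 1)) Filter.atTop (nhds (2/3)) ∧
    Filter.Tendsto (fun n : ℕ => z (2 * n + 2)) Filter.atTop (nhds (4/3)) := by
  have hz := eq_closedForm_of_rec h0 h1 hrec
  refine ⟨hz, fun k hk => hz k ▸ closedForm_nonneg (by omega), ?_, ?_⟩
  · simpa only [hz, closedForm_two_mul_add_one] using
      tendsto_sub_mul_pow_of_lt_one (by norm_num : (0 : ℝ) ≤ 1/4) (by norm_num) (2/3) (2/3)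
  · simpa only [hz, closedForm_two_mul_add_two] using
      tendsto_sub_mul_pow_of_lt_one (by norm_num : (0 : ℝ) ≤ 1/4) (by norm_num) (1/3) (4/3)
end

section
/- Let m ≥ 2 be an integer and let C_{i,j} = [2i, 2i+2] × [2j, 2j+2]. For F(x,y) = (y, 1 - (1/2)|y| + (1/2)x) and any j ∈ {0, 1, …, m}: F(C_{m-j, m}) ⊆ C_{m, -j/2} if j is even, and F(C_{m-j, m}) ⊆ C_{m, (-j-1)/2} ∪ C_{m, (-j+1)/2} if j is odd. -/
/-!
On the upper half-plane `y ≥ 0` the map is affine, `F(x, y) = (y, 1 - y/2 + x/2)`. On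
`C_{m-j,m}` the coordinate `y` ranges over `[2m, 2m+2]` and `x` over `[2m-2j, 2m-2j+2]`, so the
image lies in `[2m, 2m+2] × [-j, 2-j]`. For even `j` this is the square `C_{m,-j/2}`; for odd `j`
the interval `[-j, 2-j]` straddles the grid line `y = 1-j` and is covered by the two adjacent
squares.
-/

namespace LoziGrid

open Set

noncomputable def loziMap (p : ℝ × ℝ) : ℝ × ℝ := (p.2, 1 - (1/2) * |p.2| + (1/2) * p.1)

def square (i k : ℤ) : Set (ℝ × ℝ) :=
  Icc (2*i : ℝ) (2*i + 2) ×ˢ Icc (2*k : ℝ) (2*k + 2)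

theorem image_square_subset {m : ℤ} (hm : 0 ≤ m) (j : ℤ) :
    loziMap '' square (m - j) m ⊆ Icc (2*m : ℝ) (2*m + 2) ×ˢ Icc (-j : ℝ) (-j + 2) := by
  rintro _ ⟨⟨x, y⟩, ⟨⟨hx₁, hx₂⟩, hy₁, hy₂⟩, rfl⟩
  have hm' : (0 : ℝ) ≤ m := by exact_mod_cast hm
  push_cast at hx₁ hx₂
  rw [loziMap, abs_of_nonneg (by linarith)]
  exact ⟨⟨hy₁, hy₂⟩, by linarith, by linarith⟩

theorem Icc_neg_of_even {n : ℤ} (hn : Even n) :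
    Icc (-n : ℝ) (-n + 2) = Icc (2 * (-n / 2 : ℤ) : ℝ) (2 * (-n / 2 : ℤ) + 2) := by
  obtain ⟨k, rfl⟩ := hn
  rw [show (-(k + k) / 2 : ℤ) = -k by omega]
  push_cast
  ring_nf

theorem Icc_neg_subset_of_odd {n : ℤ} (hn : Odd n) :
    Icc (-n : ℝ) (-n + 2) ⊆ Icc (2 * ((-n - 1) / 2 : ℤ) : ℝ) (2 * ((-n - 1) / 2 : ℤ) + 2) ∪
      Icc (2 * ((-n + 1) / 2 : ℤ) : ℝ) (2 * ((-n + 1) / 2 : ℤ) + 2) := by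
  obtain ⟨k, rfl⟩ := hn
  rw [show ((-(2 * k + 1) - 1) / 2 : ℤ) = -k - 1 by omega,
    show ((-(2 * k + 1) + 1) / 2 : ℤ) = -k by omega]
  push_cast
  rintro t ⟨h₁, h₂⟩
  rcases le_total t (-2 * k) with h | h
  · exact Or.inl ⟨by linarith, by linarith⟩
  · exact Or.inr ⟨by linarith, by linarith⟩

end LoziGrid

open LoziGrid in
theorem stmt_16_general (m j : ℤ) (hm : 2 ≤ m) :
    let F : ℝ × ℝ → ℝ × ℝ := fun p => (p.2, 1 - (1/2) * |p.2| + (1/2) * p.1)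
    let C : ℤ → ℤ → Set (ℝ × ℝ) := fun i k =>
      Set.Icc (2*i : ℝ) (2*i + 2) ×ˢ Set.Icc (2*k : ℝ) (2*k + 2)
    (Even j → F '' C (m - j) m ⊆ C m (-j / 2)) ∧
    (Odd j → F '' C (m - j) m ⊆ C m ((-j - 1) / 2) ∪ C m ((-j + 1) / 2)) := by
  show (Even j → loziMap '' square (m - j) m ⊆ square m (-j / 2)) ∧
    (Odd j → loziMap '' square (m - j) m ⊆ square m ((-j - 1) / 2) ∪ square m ((-j + 1) / 2))
  have himage := image_square_subset (by omega : 0 ≤ m) j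
  constructor
  · intro hj
    rwa [Icc_neg_of_even hj] at himage
  · intro hj
    refine himage.trans ?_
    rw [square, square, ← Set.prod_union]
    exact Set.prod_mono le_rfl (Icc_neg_subset_of_odd hj)

/-- For `m ≥ 2` and `0 ≤ j ≤ m`, the image of the square `C_{m-j,m}` under
`F(x,y) = (y, 1 - (1/2)|y| + (1/2)x)` is contained in `C_{m,-j/2}` if `j` is
even, and in `C_{m,(-j-1)/2} ∪ C_{m,(-j+1)/2}` if `j` is odd. -/
theorem stmt_16 (m j : ℤ) (hm : 2 ≤ m) (hj0 : 0 ≤ j) (hjm : j ≤ m) :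
    let F : ℝ × ℝ → ℝ × ℝ := fun p => (p.2, 1 - (1/2) * |p.2| + (1/2) * p.1)
    let C : ℤ → ℤ → Set (ℝ × ℝ) := fun i k =>
      Set.Icc (2*i : ℝ) (2*i + 2) ×ˢ Set.Icc (2*k : ℝ) (2*k + 2)
    (Even j → F '' C (m - j) m ⊆ C m (-j / 2)) ∧
    (Odd j → F '' C (m - j) m ⊆ C m ((-j - 1) / 2) ∪ C m ((-j + 1) / 2)) :=
  stmt_16_general m j hm
end
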